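/- Let E be a globally minimal elliptic curve over ℚ with discriminant Δ, and let d be a squarefree integer coprime to Δ with d ≡ 1 (mod 4). Then there exist r, s, t ∈ ℚ such that the change of variables [1, r, s, t] transforms the quadratic twist E^d into a globally minimal Weierstrass equation; in particular, a minimal model of E^d has the same discriminant as E^d, namely d⁶Δ. -/

import Mathlib

set_option maxHeartbeats 2000000


open WeierstrassCurve

/-- The quadratic twist of a Weierstrass curve over `ℚ` by an integer `d`
(Connell's formula). -/
def twist (W : WeierstrassCurve ℚ) (d : ℤ) : WeierstrassCurve ℚ where
  a₁ := W.a₁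
  a₂ := W.a₂ * d + W.a₁ ^ 2 * (d - 1) / 4
  a₃ := W.a₃
  a₄ := W.a₄ * d ^ 2 + W.a₁ * W.a₃ * (d ^ 2 - 1) / 2
  a₆ := W.a₆ * d ^ 3 + W.a₃ ^ 2 * (d ^ 3 - 1) / 4

/-- The `p`-adic valuation of a rational number, with `v p 0 = ⊤`. -/
noncomputable def v (p : ℕ) (q : ℚ) : WithTop ℤ :=
  if q = 0 then ⊤ else ((padicValRat p q : ℤ) : WithTop ℤ)

/-- A Weierstrass equation over `ℚ` is integral if all its coefficients are integers. -/
def IsIntegralModel (W : WeierstrassCurve ℚ) : Prop :=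
  W.a₁.den = 1 ∧ W.a₂.den = 1 ∧ W.a₃.den = 1 ∧ W.a₄.den = 1 ∧ W.a₆.den = 1

/-- A Weierstrass equation over `ℚ` is (globally) minimal if it is integral and, for every
prime `p`, the `p`-adic valuation of its discriminant is minimal among the discriminants of
all integral Weierstrass equations obtained from it by a change of variables over `ℚ`. -/
def IsMinimal (W : WeierstrassCurve ℚ) : Prop :=
  IsIntegralModel W ∧ ∀ C : VariableChange ℚ, IsIntegralModel (C • W) →
    ∀ p : ℕ, p.Prime → v p W.Δ ≤ v p (C • W).Δ

/-- `W'` is a minimal model of `W` if `W'` is minimal and is obtained from `W` by a change of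
variables over `ℚ`. -/
def IsMinimalModelOf (W' W : WeierstrassCurve ℚ) : Prop :=
  IsMinimal W' ∧ ∃ C : VariableChange ℚ, C • W = W'

lemma den_int {q : ℚ} (h : q.den = 1) : ∃ n : ℤ, q = (n : ℚ) :=
  ⟨q.num, ((Rat.den_eq_one_iff q).1 h).symm⟩

lemma twist_Δ (W : WeierstrassCurve ℚ) (d : ℤ) : (twist W d).Δ = (d:ℚ)^6 * W.Δ := by
  simp only [twist, Δ, b₂, b₄, b₆, b₈]
  ring

lemma twist_varChange (W : WeierstrassCurve ℚ) (d : ℤ) (hd : (d:ℚ) ≠ 0)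
    (C : VariableChange ℚ) :
    ∃ C' : VariableChange ℚ, (C'.u : ℚ) = (C.u : ℚ) / d ∧
      twist (C • twist W d) d = C' • W := by
  have hu : (C.u : ℚ) ≠ 0 := C.u.ne_zero
  refine ⟨⟨Units.mk0 ((C.u : ℚ) / d) (div_ne_zero C.u.ne_zero hd),
      C.r / d,
      C.s / d + W.a₁ * (1 - d) / (2 * d),
      C.t / d ^ 3 + C.r * W.a₁ * (1 - d ^ 2) / (2 * d ^ 3)
        + W.a₃ * (1 - d ^ 3) / (2 * d ^ 3)⟩, rfl, ?_⟩
  ext <;> simp only [twist, variableChange_def, Units.val_inv_eq_inv_val, Units.val_mk0] <;>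
    field_simp <;> ring

lemma twist_integral (W : WeierstrassCurve ℚ) (d : ℤ) (hd4 : d % 4 = 1)
    (hW : IsIntegralModel W) : IsIntegralModel (twist W d) := by
  obtain ⟨n₁, h₁⟩ := den_int hW.1
  obtain ⟨n₂, h₂⟩ := den_int hW.2.1
  obtain ⟨n₃, h₃⟩ := den_int hW.2.2.1
  obtain ⟨n₄, h₄⟩ := den_int hW.2.2.2.1
  obtain ⟨n₆, h₆⟩ := den_int hW.2.2.2.2
  have hk : d = 4 * (d / 4) + 1 := by omega
  set k := d / 4 with hkdef
  have hdq : (d : ℚ) = 4 * (k : ℚ) + 1 := by exact_mod_cast congrArg (Int.cast : ℤ → ℚ) hk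
  refine ⟨?_, ?_, ?_, ?_, ?_⟩
  · show (W.a₁).den = 1
    rw [h₁]; exact Rat.den_intCast n₁
  · show (W.a₂ * d + W.a₁ ^ 2 * (d - 1) / 4).den = 1
    have : W.a₂ * d + W.a₁ ^ 2 * (d - 1) / 4 = ((n₂ * d + n₁ ^ 2 * k : ℤ) : ℚ) := by
      rw [h₁, h₂]; push_cast; rw [hdq]; ring
    rw [this]; exact Rat.den_intCast _
  · show (W.a₃).den = 1
    rw [h₃]; exact Rat.den_intCast n₃
  · show (W.a₄ * d ^ 2 + W.a₁ * W.a₃ * (d ^ 2 - 1) / 2).den = 1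
    have : W.a₄ * d ^ 2 + W.a₁ * W.a₃ * (d ^ 2 - 1) / 2
        = ((n₄ * d ^ 2 + n₁ * n₃ * (8 * k ^ 2 + 4 * k) : ℤ) : ℚ) := by
      rw [h₁, h₃, h₄]; push_cast; rw [hdq]; ring
    rw [this]; exact Rat.den_intCast _
  · show (W.a₆ * d ^ 3 + W.a₃ ^ 2 * (d ^ 3 - 1) / 4).den = 1
    have : W.a₆ * d ^ 3 + W.a₃ ^ 2 * (d ^ 3 - 1) / 4
        = ((n₆ * d ^ 3 + n₃ ^ 2 * (k * (d ^ 2 + d + 1)) : ℤ) : ℚ) := by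
      rw [h₃, h₆]; push_cast; rw [hdq]; ring
    rw [this]; exact Rat.den_intCast _

lemma integral_Δ (W : WeierstrassCurve ℚ) (hW : IsIntegralModel W) : ∃ n : ℤ, W.Δ = (n : ℚ) := by
  obtain ⟨n₁, h₁⟩ := den_int hW.1
  obtain ⟨n₂, h₂⟩ := den_int hW.2.1
  obtain ⟨n₃, h₃⟩ := den_int hW.2.2.1
  obtain ⟨n₄, h₄⟩ := den_int hW.2.2.2.1
  obtain ⟨n₆, h₆⟩ := den_int hW.2.2.2.2
  refine ⟨-(n₁^2 + 4*n₂)^2 * (n₁^2*n₆ + 4*n₂*n₆ - n₁*n₃*n₄ + n₂*n₃^2 - n₄^2)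
      - 8*(2*n₄ + n₁*n₃)^3 - 27*(n₃^2 + 4*n₆)^2
      + 9*(n₁^2 + 4*n₂)*(2*n₄ + n₁*n₃)*(n₃^2 + 4*n₆), ?_⟩
  simp only [Δ, b₂, b₄, b₆, b₈, h₁, h₂, h₃, h₄, h₆]; push_cast; ring

/-- if `d` is a squarefree integer coprime to the discriminant `Δ` of the
globally minimal curve `E` and `d ≡ 1 (mod 4)`, then a change of variables `[1, r, s, t]`
transforms `E^d` into a globally minimal Weierstrass equation; in particular a minimal model
of `E^d` has the same discriminant as `E^d`, namely `d⁶Δ`. -/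
theorem exists_variableChange_one_isMinimal
    (E : WeierstrassCurve ℚ) (d : ℤ) (hd : Squarefree d) (hd4 : d % 4 = 1)
    (hE : IsMinimal E) (hΔ : E.Δ ≠ 0)
    (D : ℤ) (hD : (D : ℚ) = E.Δ) (hcop : IsCoprime d D) :
    ∃ C : VariableChange ℚ, (C.u : ℚ) = 1 ∧
      IsMinimal (C • twist E d) ∧
      (C • twist E d).Δ = (twist E d).Δ ∧
      (twist E d).Δ = (d : ℚ) ^ 6 * E.Δ := by
  have hd0 : d ≠ 0 := hd.ne_zero
  have hdq : (d : ℚ) ≠ 0 := Int.cast_ne_zero.mpr hd0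
  have hΔtw_eq : (twist E d).Δ = (d:ℚ)^6 * E.Δ := twist_Δ E d
  have hΔtw : (twist E d).Δ ≠ 0 := by
    rw [hΔtw_eq]; exact mul_ne_zero (pow_ne_zero _ hdq) hΔ
  have hid : (1 : VariableChange ℚ) • twist E d = twist E d := one_smul _ _
  refine ⟨1, rfl, ?_, by rw [hid], hΔtw_eq⟩
  rw [hid]
  refine ⟨twist_integral E d hd4 hE.1, ?_⟩
  intro C hC p hp
  haveI : Fact p.Prime := ⟨hp⟩
  have hu : (C.u : ℚ) ≠ 0 := C.u.ne_zero
  have hΔ' : (C • twist E d).Δ ≠ 0 := by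
    rw [variableChange_Δ]; exact mul_ne_zero (pow_ne_zero _ (Units.ne_zero _)) hΔtw
  rw [v, v, if_neg hΔtw, if_neg hΔ']
  refine WithTop.coe_le_coe.mpr ?_
  set m := padicValRat p (C.u : ℚ) with hm
  have hΔ'val : padicValRat p (C • twist E d).Δ
      = padicValRat p (twist E d).Δ - 12 * m := by
    rw [variableChange_Δ, padicValRat.mul (pow_ne_zero _ (Units.ne_zero _)) hΔtw,
      Units.val_inv_eq_inv_val, padicValRat.pow ((C.u : ℚ)⁻¹), padicValRat.inv]
    push_cast; ring
  rw [hΔ'val]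
  suffices hms : m ≤ 0 by linarith
  by_contra hmpos
  push_neg at hmpos
  have hm1 : 1 ≤ m := hmpos
  by_cases hpd : (p : ℤ) ∣ d
  · obtain ⟨n, hn⟩ := integral_Δ _ hC
    have h0 : (0:ℤ) ≤ padicValRat p (C • twist E d).Δ := by
      rw [hn, padicValRat.of_int]; exact Int.natCast_nonneg _
    have hvd : padicValRat p (d:ℚ) ≤ 1 := by
      rw [padicValRat.of_int]
      by_contra hge
      push_neg at hge
      have h2 : 2 ≤ padicValInt p d := by exact_mod_cast hge
      have hsq : (p:ℤ) ^ 2 ∣ d := (padicValInt_dvd_iff 2 d).mpr (Or.inr h2)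
      have hunit : IsUnit ((p:ℤ)) := hd (p:ℤ) (by rwa [← sq])
      rw [Int.isUnit_iff] at hunit
      have h2p : 2 ≤ p := hp.two_le
      rcases hunit with h | h <;> omega
    have hD0 : (D:ℚ) ≠ 0 := by rw [hD]; exact hΔ
    have hvD : padicValRat p (D:ℚ) = 0 := by
      rw [padicValRat.of_int, padicValInt.eq_zero_of_not_dvd]
      · norm_num
      · intro hdvd
        have hunit : IsUnit ((p:ℤ)) := hcop.isUnit_of_dvd' hpd hdvd
        rw [Int.isUnit_iff] at hunit
        have h2p : 2 ≤ p := hp.two_le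
        rcases hunit with h | h <;> omega
    have htwval : padicValRat p (twist E d).Δ
        = 6 * padicValRat p (d:ℚ) + padicValRat p (D:ℚ) := by
      rw [hΔtw_eq, ← hD, padicValRat.mul (pow_ne_zero _ hdq) hD0, padicValRat.pow (d : ℚ)]
      push_cast; ring
    rw [hΔ'val, htwval, hvD] at h0
    linarith
  · obtain ⟨C'', hC''u, hC''⟩ := twist_varChange E d hdq C
    have hint : IsIntegralModel (C'' • E) := by
      rw [← hC'']; exact twist_integral _ d hd4 hC
    have hmin := hE.2 C'' hint p hp
    have hΔE' : (C'' • E).Δ ≠ 0 := by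
      rw [variableChange_Δ]; exact mul_ne_zero (pow_ne_zero _ (Units.ne_zero _)) hΔ
    rw [v, v, if_neg hΔ, if_neg hΔE'] at hmin
    have hmin' := WithTop.coe_le_coe.mp hmin
    have hvd0 : padicValRat p (d:ℚ) = 0 := by
      rw [padicValRat.of_int, padicValInt.eq_zero_of_not_dvd hpd]; norm_num
    have hval : padicValRat p (C'' • E).Δ = padicValRat p E.Δ - 12 * m := by
      rw [variableChange_Δ, padicValRat.mul (pow_ne_zero _ (Units.ne_zero _)) hΔ,
        Units.val_inv_eq_inv_val, padicValRat.pow ((C''.u : ℚ)⁻¹),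
        padicValRat.inv, hC''u, padicValRat.div hu hdq, hvd0]
      push_cast; ring
    rw [hval] at hmin'
    linarith
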